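/- Let G be an open subset of ℝ^d, T > 0, and let Y : [0,T] × ℝ^d → C([0,T]; ℝ^d), (t,x) ↦ Y^{t,x}, satisfy: (i) (t,x) ↦ Y^{t,x} is continuous from [0,T] × ℝ^d into C([0,T]; ℝ^d) with the supremum norm; (ii) Y^{t,x}(s) = x for all s ∈ [0,t]. Let f : [0,T] × ℝ^d → [0, +∞] be Borel measurable and such that for each s ∈ [0,T] the function x ↦ f(s,x) is lower semicontinuous on ℝ^d. Define τ(t,x) = min(inf{s ∈ [t,T] : Y^{t,x}(s) ∉ G}, T) and J(t,x) = ∫_t^{τ(t,x)} f(s, Y^{t,x}(s)) ds (a Lebesgue integral with values in [0, +∞]). Then J is lower semicontinuous on [0,T] × ℝ^d. -/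

import Mathlib

/-!
Away from its endpoints the interval of integration is stable under perturbation: the start time
depends continuously on the parameter, and the exit time is lower semicontinuous, because a path
that stays in the open set `G` up to time `b` does so on the compact set `[0, b]`, which is an
open condition in the compact-open topology of `C([0,T]; ℝ^d)`. Since the endpoint `τ` is a null
set, the integrand `𝟙_{(t, τ]}(s) f(s, Y^{t,x}(s))` is lower semicontinuous in `(t, x)` for
almost every `s`, and Fatou's lemma carries this over to the integral.
-/

open MeasureTheory
open scoped ENNReal

/-- The exit time of a continuous path `Z : [0,T] → ℝ^d` from the open set `G` after
time `t`: `min(inf {s ∈ [t,T] : Z s ∉ G}, T)`, the infimum of the empty set being `+∞`. -/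
noncomputable def exitTimeAfter (d : ℕ) (T : ℝ) (G : Set (EuclideanSpace ℝ (Fin d)))
    (t : ℝ) (Z : C(Set.Icc (0:ℝ) T, EuclideanSpace ℝ (Fin d))) : ℝ :=
  sInf (insert T {s : ℝ | ∃ hs : s ∈ Set.Icc (0:ℝ) T, t ≤ s ∧ Z ⟨s, hs⟩ ∉ G})

open Filter Set Topology

section ExitTime

variable {d : ℕ} {T : ℝ} {G : Set (EuclideanSpace ℝ (Fin d))} {t b : ℝ}
  {Z : C(Icc (0:ℝ) T, EuclideanSpace ℝ (Fin d))}

theorem bddBelow_exitTimeAfter_set :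
    BddBelow (insert T {s : ℝ | ∃ hs : s ∈ Icc (0:ℝ) T, t ≤ s ∧ Z ⟨s, hs⟩ ∉ G}) := by
  refine ⟨min 0 T, ?_⟩
  rintro u (rfl | ⟨hu, -, -⟩)
  · exact min_le_right _ _
  · exact (min_le_left _ _).trans hu.1

theorem exitTimeAfter_le : exitTimeAfter d T G t Z ≤ T :=
  csInf_le bddBelow_exitTimeAfter_set (mem_insert _ _)

theorem mem_of_lt_exitTimeAfter {u : Icc (0:ℝ) T} (htu : t ≤ u)
    (hu : (u : ℝ) < exitTimeAfter d T G t Z) : Z u ∈ G := by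
  by_contra hZu
  exact hu.not_ge (csInf_le bddBelow_exitTimeAfter_set (mem_insert_of_mem _ ⟨u.2, htu, hZu⟩))

theorem le_exitTimeAfter (hbT : b ≤ T)
    (hZ : ∀ u : Icc (0:ℝ) T, t ≤ u → (u : ℝ) < b → Z u ∈ G) :
    b ≤ exitTimeAfter d T G t Z := by
  refine le_csInf (insert_nonempty _ _) ?_
  rintro u (rfl | ⟨hu, htu, hZu⟩)
  · exact hbT
  · exact not_lt.1 fun hub => hZu (hZ ⟨u, hu⟩ htu hub)

theorem eventually_le_exitTimeAfter {X : Type*} [TopologicalSpace X] (hG : IsOpen G)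
    {τ : X → ℝ} {Y : X → C(Icc (0:ℝ) T, EuclideanSpace ℝ (Fin d))} {p : X}
    (hY : ContinuousAt Y p) (hb : b < exitTimeAfter d T G (τ p) (Y p))
    (hinit : ∀ u : Icc (0:ℝ) T, (u : ℝ) ≤ τ p → Y p u ∈ G) :
    ∀ᶠ q in 𝓝 p, b ≤ exitTimeAfter d T G (τ q) (Y q) := by
  have hK : IsCompact {u : Icc (0:ℝ) T | (u : ℝ) ≤ b} :=
    (isClosed_le continuous_subtype_val continuous_const).isCompact
  have hmaps : MapsTo (Y p) {u | (u : ℝ) ≤ b} G := fun u hu =>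
    (le_or_gt (u : ℝ) (τ p)).elim (hinit u) fun h =>
      mem_of_lt_exitTimeAfter h.le (hu.trans_lt hb)
  filter_upwards [hY.eventually (ContinuousMap.eventually_mapsTo hK hG hmaps)] with q hq
  exact le_exitTimeAfter (hb.trans_le exitTimeAfter_le).le fun u _ hu => hq hu.le

end ExitTime

section Semicontinuity

variable {X α : Type*} [TopologicalSpace X]

theorem LowerSemicontinuousAt.indicator_apply {S : X → Set α} {g : X → α → ℝ≥0∞} {p : X}
    {a : α} (hg : LowerSemicontinuousAt (fun q => g q a) p)
    (hS : a ∈ S p → ∀ᶠ q in 𝓝 p, a ∈ S q) :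
    LowerSemicontinuousAt (fun q => (S q).indicator (g q) a) p := by
  intro y (hy : y < (S p).indicator (g p) a)
  by_cases ha : a ∈ S p
  · rw [indicator_of_mem ha] at hy
    filter_upwards [hS ha, hg y hy] with q haq hq
    rwa [indicator_of_mem haq]
  · rw [indicator_of_notMem ha] at hy
    exact absurd hy ENNReal.not_lt_zero

theorem lowerSemicontinuousAt_lintegral [MeasurableSpace α] [FirstCountableTopology X]
    {μ : Measure α} {F : X → α → ℝ≥0∞} {p : X} (hF : ∀ q, AEMeasurable (F q) μ)
    (h : ∀ᵐ a ∂μ, LowerSemicontinuousAt (fun q => F q a) p) :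
    LowerSemicontinuousAt (fun q => ∫⁻ a, F q a ∂μ) p := by
  rw [lowerSemicontinuousAt_iff_le_liminf]
  calc ∫⁻ a, F p a ∂μ ≤ ∫⁻ a, liminf (fun q => F q a) (𝓝 p) ∂μ :=
        lintegral_mono_ae (h.mono fun _ ha => ha.le_liminf)
    _ ≤ liminf (fun q => ∫⁻ a, F q a ∂μ) (𝓝 p) := lintegral_liminf_le' hF

end Semicontinuity

/-- Let `(t,x) ↦ Y^{t,x}` be continuous from `[0,T] × ℝ^d` into `C([0,T]; ℝ^d)` with the
supremum norm, with `Y^{t,x}(s) = x` for `s ∈ [0,t]`.  Let `f : [0,T] × ℝ^d → [0,∞]` be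
Borel measurable with `x ↦ f(s,x)` lower semicontinuous for each `s`.  Then the payoff
`J(t,x) = ∫_t^{τ(t,x)} f(s, Y^{t,x}(s)) ds` is lower semicontinuous on `[0,T] × ℝ^d`. -/
theorem payoff_lowerSemicontinuous (d : ℕ) (T : ℝ) (hT : 0 < T)
    (G : Set (EuclideanSpace ℝ (Fin d))) (hG : IsOpen G)
    (Y : Set.Icc (0:ℝ) T → EuclideanSpace ℝ (Fin d) →
      C(Set.Icc (0:ℝ) T, EuclideanSpace ℝ (Fin d)))
    (hYcont : Continuous fun p : Set.Icc (0:ℝ) T × EuclideanSpace ℝ (Fin d) => Y p.1 p.2)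
    (hYinit : ∀ (t : Set.Icc (0:ℝ) T) (x : EuclideanSpace ℝ (Fin d))
      (s : Set.Icc (0:ℝ) T), (s : ℝ) ≤ (t : ℝ) → Y t x s = x)
    (f : ℝ → EuclideanSpace ℝ (Fin d) → ℝ≥0∞)
    (hf : Measurable (Function.uncurry f))
    (hflsc : ∀ s : ℝ, LowerSemicontinuous (f s)) :
    LowerSemicontinuous fun p : Set.Icc (0:ℝ) T × EuclideanSpace ℝ (Fin d) =>
      ∫⁻ s in Set.Ioc (p.1 : ℝ) (exitTimeAfter d T G (p.1 : ℝ) (Y p.1 p.2)),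
        f s (Set.IccExtend hT.le (Y p.1 p.2) s) := by
  intro p
  simp only [← lintegral_indicator measurableSet_Ioc]
  refine lowerSemicontinuousAt_lintegral (fun q => ?_) ?_
  · have hpath : Continuous (Set.IccExtend hT.le (Y q.1 q.2)) := (Y q.1 q.2).continuous.Icc_extend'
    exact ((hf.comp (measurable_id.prodMk hpath.measurable)).indicator
      measurableSet_Ioc).aemeasurable
  filter_upwards [Measure.ae_ne volume (exitTimeAfter d T G p.1 (Y p.1 p.2))] with s hsτ
  have hcont : Continuous fun q : Set.Icc (0:ℝ) T × EuclideanSpace ℝ (Fin d) =>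
      Set.IccExtend hT.le (Y q.1 q.2) s :=
    (continuous_eval_const _).comp hYcont
  refine ((hflsc s).comp hcont).lowerSemicontinuousAt p |>.indicator_apply fun hs => ?_
  have hx : p.2 ∈ G :=
    hYinit p.1 p.2 p.1 le_rfl ▸ mem_of_lt_exitTimeAfter le_rfl (hs.1.trans_le hs.2)
  have hstart : ∀ᶠ q in 𝓝 p, (q.1 : ℝ) < s :=
    ((continuous_subtype_val.comp continuous_fst).tendsto p).eventually_lt_const hs.1
  have hexit : ∀ᶠ q in 𝓝 p, s ≤ exitTimeAfter d T G q.1 (Y q.1 q.2) :=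
    eventually_le_exitTimeAfter hG hYcont.continuousAt (lt_of_le_of_ne hs.2 hsτ)
      fun u hu => (hYinit p.1 p.2 u hu).symm ▸ hx
  filter_upwards [hstart, hexit] with q h1 h2 using ⟨h1, h2⟩
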